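/- arXiv:1807.01181 — 12 statements merged into one kernel-verified Lean document; each statement's English description precedes it below -/
import Mathlib

section
/- Let F be a field with characteristic not equal to 2. Then every element x of F can be written as a product a·b·c·d of four elements of F satisfying a + b + c + d = 1. -/
theorem stmt0 (F : Type*) [Field F] (hchar : ringChar F ≠ 2) (x : F) :
    ∃ a b c d : F, a * b * c * d = x ∧ a + b + c + d = 1 := by
  have h2 : (2 : F) ≠ 0 := Ring.two_ne_zero hchar
  by_cases hx1 : x = 1
  · subst hx1
    by_cases h3 : (3 : F) = 0
    · refine ⟨1, 1, 1, 1, by ring, ?_⟩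
      have : (1 : F) + 1 + 1 + 1 = 3 + 1 := by ring
      rw [this, h3, zero_add]
    · exact ⟨3/2, -1/3, 4/3, -3/2, by field_simp; ring, by field_simp; ring⟩
  · have hd : x - 1 ≠ 0 := sub_ne_zero.mpr hx1
    refine ⟨x - 1, 1 - x, x / (x - 1), -1 / (x - 1), ?_, ?_⟩
    · field_simp
      ring
    · field_simp
      ring
end

section
/- Let F be a field with characteristic not equal to 2, let α be a nonzero element of F, and let k ≥ 4 be an integer. Then every element x of F can be written as a product a₁·a₂·…·a_k of k elements of F satisfying a₁ + a₂ + … + a_k = α. -/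
lemma core4 {F : Type*} [Field F] (hchar : ringChar F ≠ 2) (s z : F) (hs : s ≠ 0) :
    ∃ a : Fin 4 → F, (∏ i, a i) = z ∧ (∑ i, a i) = s := by
  have h2 : (2 : F) ≠ 0 := Ring.two_ne_zero hchar
  by_cases h : ∃ v : F, v ≠ 0 ∧ v ^ 2 ≠ z
  · obtain ⟨v, hv0, hvz⟩ := h
    set t : F := (z - v ^ 2) / (s * v) with ht
    have ht0 : t ≠ 0 := div_ne_zero (sub_ne_zero.mpr (Ne.symm hvz)) (mul_ne_zero hs hv0)
    have key : s * v * t = z - v ^ 2 := by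
      rw [ht]; field_simp
    refine ⟨![t, -t, s + v / t, -(v / t)], ?_, ?_⟩
    · rw [Fin.prod_univ_four]
      simp only [Matrix.cons_val_zero, Matrix.cons_val_one, Matrix.head_cons,
        Matrix.cons_val_two, Matrix.tail_cons, Matrix.cons_val_three]
      have expand : t * -t * (s + v / t) * -(v / t) = s * v * t + v ^ 2 := by
        field_simp
      rw [expand, key]; ring
    · rw [Fin.sum_univ_four]
      simp only [Matrix.cons_val_zero, Matrix.cons_val_one, Matrix.head_cons,
        Matrix.cons_val_two, Matrix.tail_cons, Matrix.cons_val_three]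
      ring
  · push_neg at h
    have h1 : z = 1 := by have := h 1 one_ne_zero; simpa using this.symm
    have h4 : (4 : F) = z := by have := h 2 h2; linear_combination this
    have hsq : s ^ 2 = z := h s hs
    refine ⟨![s, s, s, s], ?_, ?_⟩
    · rw [Fin.prod_univ_four]
      simp only [Matrix.cons_val_zero, Matrix.cons_val_one, Matrix.head_cons,
        Matrix.cons_val_two, Matrix.tail_cons, Matrix.cons_val_three]
      have : s * s * s * s = (s ^ 2) ^ 2 := by ring
      rw [this, hsq, h1, one_pow]
    · rw [Fin.sum_univ_four]
      simp only [Matrix.cons_val_zero, Matrix.cons_val_one, Matrix.head_cons,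
        Matrix.cons_val_two, Matrix.tail_cons, Matrix.cons_val_three]
      have : (4 : F) = 1 := by rw [h4, h1]
      linear_combination s * this
  
lemma coreN {F : Type*} [Field F] (hchar : ringChar F ≠ 2) (n : ℕ) :
    ∀ s z : F, s ≠ 0 → ∃ a : Fin (4 + n) → F, (∏ i, a i) = z ∧ (∑ i, a i) = s := by
  have h2 : (2 : F) ≠ 0 := Ring.two_ne_zero hchar
  induction n with
  | zero => exact fun s z hs => core4 hchar s z hs
  | succ n ih =>
    intro s z hs
    by_cases h1 : s = 1
    · obtain ⟨a, hp, hsum⟩ := ih 2 (-z) h2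
      refine ⟨Fin.cons (-1) a, ?_, ?_⟩
      · show ∏ i : Fin ((4 + n) + 1), Fin.cons (-1) a i = z
        rw [Fin.prod_cons, hp]; ring
      · show ∑ i : Fin ((4 + n) + 1), Fin.cons (-1) a i = s
        rw [Fin.sum_cons, hsum, h1]; ring
    · obtain ⟨a, hp, hsum⟩ := ih (s - 1) z (sub_ne_zero.mpr h1)
      refine ⟨Fin.cons 1 a, ?_, ?_⟩
      · show ∏ i : Fin ((4 + n) + 1), Fin.cons 1 a i = z
        rw [Fin.prod_cons, hp]; ring
      · show ∑ i : Fin ((4 + n) + 1), Fin.cons 1 a i = s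
        rw [Fin.sum_cons, hsum]; ring

theorem stmt1 (F : Type*) [Field F] (hchar : ringChar F ≠ 2) (α : F) (hα : α ≠ 0)
    (k : ℕ) (hk : 4 ≤ k) (x : F) :
    ∃ a : Fin k → F, (∏ i, a i) = x ∧ (∑ i, a i) = α := by
  obtain ⟨n, rfl⟩ := Nat.exists_eq_add_of_le hk
  exact coreN hchar n α x hα
end

section
/- Every rational number x can be written as a·b·c·d·(a+b+c+d) for some rational numbers a, b, c, d. -/
theorem stmt2 (x : ℚ) : ∃ a b c d : ℚ, a * b * c * d * (a + b + c + d) = x := by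
  by_cases h : x = 2
  · exact ⟨1, 2, -1, -1, by subst h; norm_num⟩
  · refine ⟨(x - 2) / 4, -((x - 2) / 4), 2 * x / (x - 2), -4 / (x - 2), ?_⟩
    have h2 : x - 2 ≠ 0 := sub_ne_zero.mpr h
    field_simp
    ring
end

section
/- Let F be a field with characteristic not equal to 2 and 3, and let k ≥ 4 be an integer. Then every element x of F can be written as a sum a₁ + a₂ + … + a_k of k elements of F whose product a₁·a₂·…·a_k equals -1. -/
private lemma sum_cons4 {F : Type*} [Field F] (m : ℕ) (a b c d : F) :
    (∑ i : Fin (m + 4),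
      Fin.cons a (Fin.cons b (Fin.cons c (Fin.cons d (fun _ : Fin m => (1 : F))))) i)
      = a + b + c + d + m := by
  rw [Fin.sum_cons, Fin.sum_cons, Fin.sum_cons, Fin.sum_cons]
  simp [Finset.sum_const]
  ring

private lemma prod_cons4 {F : Type*} [Field F] (m : ℕ) (a b c d : F) :
    (∏ i : Fin (m + 4),
      Fin.cons a (Fin.cons b (Fin.cons c (Fin.cons d (fun _ : Fin m => (1 : F))))) i)
      = a * b * c * d := by
  rw [Fin.prod_cons, Fin.prod_cons, Fin.prod_cons, Fin.prod_cons]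
  simp
  ring

theorem stmt3 (F : Type*) [Field F] (h2 : ringChar F ≠ 2) (h3 : ringChar F ≠ 3)
    (k : ℕ) (hk : 4 ≤ k) (x : F) :
    ∃ a : Fin k → F, (∑ i, a i) = x ∧ (∏ i, a i) = -1 := by
  have h2' : (2 : F) ≠ 0 := Ring.two_ne_zero h2
  have h3' : (3 : F) ≠ 0 := fun h => h3 (CharP.ringChar_of_prime_eq_zero Nat.prime_three h)
  have h6 : (6 : F) ≠ 0 := by have h := mul_ne_zero h2' h3'; norm_num at h; exact h
  have h36 : (36 : F) ≠ 0 := by have h := mul_ne_zero h6 h6; norm_num at h; exact h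
  obtain ⟨m, rfl⟩ : ∃ m, k = m + 4 := ⟨k - 4, by omega⟩
  by_cases hx : x = (m : F)
  · -- use (1/6, 4/3, 3/2, -3, 1, ..., 1)
    refine ⟨Fin.cons (1/6) (Fin.cons (4/3) (Fin.cons (3/2) (Fin.cons (-3)
      (fun _ : Fin m => (1 : F))))), ?_, ?_⟩
    · rw [sum_cons4, hx]
      field_simp
      norm_num
    · rw [prod_cons4]
      field_simp
      norm_num
  · -- use (t, -t, 1/t, 1/t, 1, ..., 1) with t = 2 / (x - m)
    have hd : x - (m : F) ≠ 0 := sub_ne_zero.mpr hx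
    set t : F := 2 / (x - (m : F)) with ht
    have htne : t ≠ 0 := div_ne_zero h2' hd
    refine ⟨Fin.cons t (Fin.cons (-t) (Fin.cons (1/t) (Fin.cons (1/t)
      (fun _ : Fin m => (1 : F))))), ?_, ?_⟩
    · rw [sum_cons4, ht]
      field_simp
      ring
    · rw [prod_cons4]
      field_simp
end

section
/- Let F be a field with characteristic not equal to 2, and let k ≥ 4 be an integer. Then every nonzero element x of F can be written as a sum a₁ + a₂ + … + a_k of k elements of F whose product equals -1. -/
lemma ofList {F : Type*} [CommRing F] (k : ℕ) (l : List F) (hl : l.length = k)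
    (x : F) (hs : l.sum = x) (hp : l.prod = -1) :
    ∃ a : Fin k → F, (∑ i, a i) = x ∧ (∏ i, a i) = -1 := by
  subst hl
  exact ⟨fun i => l[i.1], by simp [hs], by simp [hp]⟩

theorem stmt4 (F : Type*) [Field F] (h2 : ringChar F ≠ 2)
    (k : ℕ) (hk : 4 ≤ k) (x : F) (hx : x ≠ 0) :
    ∃ a : Fin k → F, (∑ i, a i) = x ∧ (∏ i, a i) = -1 := by
  have h2' : (2 : F) ≠ 0 := Ring.two_ne_zero h2
  set s : F := x - ((k : F) - 4) with hs
  by_cases hs0 : s ≠ 0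
  · -- terms y, -1/y, -y, -1/y, and (k-4) ones, with y = -2/s
    set y : F := -2 / s with hy
    have hyne : y ≠ 0 := by
      rw [hy]
      exact div_ne_zero (neg_ne_zero.mpr h2') hs0
    refine ofList k ([y, -1/y, -y, -1/y] ++ List.replicate (k - 4) 1) ?_ x ?_ ?_
    · simp only [List.length_append, List.length_cons, List.length_nil, List.length_replicate]; omega
    · have hc : ((k - 4 : ℕ) : F) = (k : F) - 4 := by
        push_cast [Nat.cast_sub hk]; ring
      simp only [List.sum_append, List.sum_replicate, List.sum_cons, List.sum_nil,
        nsmul_eq_mul, mul_one, hc]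
      rw [hy]
      field_simp
      ring
    · simp only [List.prod_append, List.prod_replicate, one_pow, List.prod_cons,
        List.prod_nil, mul_one]
      field_simp
  · push_neg at hs0
    have hxval : x = (k : F) - 4 := sub_eq_zero.mp hs0
    have hk5 : 5 ≤ k := by
      rcases Nat.lt_or_ge k 5 with h | h
      · interval_cases k
        · exfalso; apply hx; rw [hxval]; norm_num
      · exact h
    by_cases h3 : (3 : F) = 0
    · -- char 3: five (-1)'s and (k-5) ones
      refine ofList k (List.replicate 5 (-1) ++ List.replicate (k - 5) 1) ?_ x ?_ ?_
      · simp only [List.length_append, List.length_replicate]; omega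
      · have hc : ((k - 5 : ℕ) : F) = (k : F) - 5 := by
          push_cast [Nat.cast_sub hk5]; ring
        simp only [List.sum_append, List.sum_replicate, nsmul_eq_mul, mul_one, hc, hxval]
        have h6 : (6 : F) = 0 := by
          have : (6 : F) = 2 * 3 := by norm_num
          rw [this, h3, mul_zero]
        linear_combination -h6
      · simp [List.prod_replicate]
    · -- char ≠ 2, 3: terms -1/12, 1/12, -4, 9, -4 and (k-5) ones
      have h12 : (12 : F) ≠ 0 := by
        have : (12 : F) = 2 * 2 * 3 := by norm_num
        rw [this]
        exact mul_ne_zero (mul_ne_zero h2' h2') h3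
      refine ofList k ([-1/12, 1/12, -4, 9, -4] ++ List.replicate (k - 5) 1) ?_ x ?_ ?_
      · simp only [List.length_append, List.length_cons, List.length_nil, List.length_replicate]; omega
      · have hc : ((k - 5 : ℕ) : F) = (k : F) - 5 := by
          push_cast [Nat.cast_sub hk5]; ring
        simp only [List.sum_append, List.sum_replicate, List.sum_cons, List.sum_nil,
          nsmul_eq_mul, mul_one, hc, hxval]
        field_simp
        ring
      · simp only [List.prod_append, List.prod_replicate, one_pow, List.prod_cons,
          List.prod_nil, mul_one]
        field_simp
        ring
end

section
/- Let F be a field with characteristic not equal to 2 and 3, and let k ≥ 4 be an integer. Then every element x of F can be written as a sum a₁ + a₂ + … + a_k of k elements of F whose product a₁·a₂·…·a_k equals 1. -/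
theorem stmt5 (F : Type*) [Field F] (h2 : ringChar F ≠ 2) (h3 : ringChar F ≠ 3)
    (k : ℕ) (hk : 4 ≤ k) (x : F) :
    ∃ a : Fin k → F, (∑ i, a i) = x ∧ (∏ i, a i) = 1 := by
  have h2' : (2 : F) ≠ 0 := Ring.two_ne_zero h2
  have h3' : (3 : F) ≠ 0 := by
    intro h
    have h' : ((3 : ℕ) : F) = 0 := by norm_cast
    rw [ringChar.spec, Nat.dvd_prime Nat.prime_three] at h'
    exact h'.elim (fun h1 => CharP.ringChar_ne_one h1) h3
  obtain ⟨m, rfl⟩ := Nat.exists_eq_add_of_le' hk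
  set y : F := x - m with hy
  by_cases hy0 : y = 0
  · refine ⟨Fin.cons 1 (Fin.cons (-1) (Fin.cons 1 (Fin.cons (-1) fun _ => 1))), ?_, ?_⟩
    · have hx : x = (m : F) := by
        have := hy0
        rw [hy, sub_eq_zero] at this
        exact this
      simp [Fin.sum_cons, Finset.sum_const, hx]
    · simp [Fin.prod_cons]
  · refine ⟨Fin.cons (3 / (2 * y)) (Fin.cons (-(3 / (2 * y)))
      (Fin.cons (4 * y / 3) (Fin.cons (-(y / 3)) fun _ => 1))), ?_, ?_⟩
    · simp only [Fin.sum_cons, Finset.sum_const, Finset.card_univ, Fintype.card_fin,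
        nsmul_eq_mul, mul_one]
      have : 4 * y / 3 + -(y / 3) = y := by
        field_simp
        ring
      linear_combination this
    · simp only [Fin.prod_cons, Finset.prod_const_one, mul_one]
      have hy2 : (2 : F) * y ≠ 0 := mul_ne_zero h2' hy0
      field_simp
      ring
end

section
/- Let F be a field with characteristic not equal to 2, and let k ≥ 2 be an integer. Then for every element x of F there exist elements a₁, …, a_{2k} of F such that a₁ + … + a_{2k} = x = a₁·a₂·…·a_{2k}. -/
private lemma fin_of_list {F : Type*} [Field F] {n : ℕ} (l : List F) (hl : l.length = n) :
    ∃ a : Fin n → F, (∑ i, a i) = l.sum ∧ (∏ i, a i) = l.prod := by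
  subst hl
  exact ⟨l.get, by rw [← List.sum_ofFn, List.ofFn_get], by rw [← List.prod_ofFn, List.ofFn_get]⟩

private def dlist (F : Type*) [Field F] : ℕ → List F
  | 0 => [2, -2, -1, 2⁻¹]
  | 1 => [2, -2, 1, -2⁻¹, 1, -1]
  | (n+2) => 1 :: -1 :: 1 :: -1 :: dlist F n

private lemma dlist_length (F : Type*) [Field F] (n : ℕ) : (dlist F n).length = 2*n + 4 := by
  induction n using Nat.strong_induction_on with
  | _ n ih =>
    match n with
    | 0 => simp [dlist]
    | 1 => simp [dlist]
    | (m+2) =>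
      have h := ih m (by omega)
      simp only [dlist, List.length_cons, h]
      omega

private lemma dlist_spec (F : Type*) [Field F] (h2 : (2:F) ≠ 0) (n : ℕ) :
    (dlist F n).sum * (dlist F n).prod = -1 := by
  induction n using Nat.strong_induction_on with
  | _ n ih =>
    match n with
    | 0 =>
      simp only [dlist, List.sum_cons, List.prod_cons, List.sum_nil, List.prod_nil]
      field_simp
      ring
    | 1 =>
      simp only [dlist, List.sum_cons, List.prod_cons, List.sum_nil, List.prod_nil]
      field_simp
      ring
    | (m+2) =>
      have h := ih m (by omega)
      simp only [dlist, List.sum_cons, List.prod_cons]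
      calc (1 + (-1 + (1 + (-1 + (dlist F m).sum)))) *
            (1 * (-1 * (1 * (-1 * (dlist F m).prod))))
          = (dlist F m).sum * (dlist F m).prod := by ring
        _ = -1 := h

theorem stmt6 (F : Type*) [Field F] (h2 : ringChar F ≠ 2)
    (k : ℕ) (hk : 2 ≤ k) (x : F) :
    ∃ a : Fin (2 * k) → F, (∑ i, a i) = x ∧ (∏ i, a i) = x := by
  have h2' : (2 : F) ≠ 0 := Ring.two_ne_zero h2
  rcases eq_or_lt_of_le hk with hk2 | hk3
  · -- k = 2
    subst hk2
    by_cases hx0 : x = 0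
    · obtain ⟨a, hs, hp⟩ := fin_of_list (F := F) (n := 2 * 2) [0, 0, 1, -1] (by simp)
      exact ⟨a, by rw [hs]; simp [hx0], by rw [hp]; simp [hx0]⟩
    by_cases hx1 : x = 1
    · by_cases h3 : (3 : F) = 0
      · obtain ⟨a, hs, hp⟩ := fin_of_list (F := F) (n := 2 * 2) [1, 1, 1, 1] (by simp)
        refine ⟨a, ?_, by rw [hp]; simp [hx1]⟩
        rw [hs, hx1]
        simp only [List.sum_cons, List.sum_nil]
        linear_combination h3
      · have h8 : (8 : F) ≠ 0 := by
          have h : (8 : F) = 2 ^ 3 := by norm_num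
          rw [h]; exact pow_ne_zero _ h2'
        have h576 : (576 : F) ≠ 0 := by
          have h : (576 : F) = 2 ^ 6 * 3 ^ 2 := by norm_num
          rw [h]; exact mul_ne_zero (pow_ne_zero _ h2') (pow_ne_zero _ h3)
        obtain ⟨a, hs, hp⟩ := fin_of_list (F := F) (n := 2 * 2)
          [-8/3, 8/3, 9/8, -1/8] (by simp)
        refine ⟨a, ?_, ?_⟩
        · rw [hs, hx1]
          simp only [List.sum_cons, List.sum_nil]
          field_simp
          norm_num
        · rw [hp, hx1]
          simp only [List.prod_cons, List.prod_nil]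
          field_simp
          norm_num
    · -- x ≠ 0, x ≠ 1
      set w : F := (x - 1) / x with hw
      have hx1' : x - 1 ≠ 0 := sub_ne_zero.mpr hx1
      have hwne : w ≠ 0 := div_ne_zero hx1' hx0
      obtain ⟨a, hs, hp⟩ := fin_of_list (F := F) (n := 2 * 2)
        [x / w, w, -w, -w⁻¹] (by simp)
      refine ⟨a, ?_, ?_⟩
      · rw [hs]
        simp only [List.sum_cons, List.sum_nil]
        rw [hw]
        field_simp
        ring
      · rw [hp]
        simp only [List.prod_cons, List.prod_nil]
        field_simp
  · -- k ≥ 3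
    have hk3' : 3 ≤ k := hk3
    set C : List F := dlist F (k - 3) with hC
    have hlen : C.length = 2 * (k - 3) + 4 := dlist_length F (k - 3)
    have hspec : C.sum * C.prod = -1 := dlist_spec F h2' (k - 3)
    obtain ⟨a, hs, hp⟩ := fin_of_list (F := F) (n := 2 * k) (x :: (-(C.sum)) :: C)
      (by simp [hlen]; omega)
    refine ⟨a, ?_, ?_⟩
    · rw [hs]; simp
    · rw [hp]; simp only [List.prod_cons]
      calc x * (-C.sum * C.prod) = x * -(C.sum * C.prod) := by ring
        _ = x := by rw [hspec]; ring
end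

section
/- Let F be a field with characteristic not equal to 2. Then for every element x of F there exist a, b, c, d in F with a + b + c + d = x and a·b·c·d = x. -/
section

variable {F : Type*} [Field F]

/- The witness splits into two pairs: `a * b = ((x + 1) / 2) ^ 2` and `c * d = x * (2 / (x + 1)) ^ 2`,
while `a + b = (x ^ 2 + 1) / (x - 1)` and `c + d = (x + 1) / (1 - x)`. -/
theorem exists_sum_eq_prod_eq_of_ne_one_of_ne_neg_one (h2 : (2 : F) ≠ 0) {x : F}
    (hx₁ : x ≠ 1) (hx₂ : x ≠ -1) :
    ∃ a b c d : F, a + b + c + d = x ∧ a * b * c * d = x := by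
  have hsub : x - 1 ≠ 0 := sub_ne_zero.mpr hx₁
  have hsub' : 1 - x ≠ 0 := sub_ne_zero.mpr hx₁.symm
  have hadd : 1 + x ≠ 0 := by
    rw [add_comm, ← sub_neg_eq_add]
    exact sub_ne_zero.mpr hx₂
  have hsq : 1 - x ^ 2 ≠ 0 := by
    rw [show 1 - x ^ 2 = (1 - x) * (1 + x) by ring]
    exact mul_ne_zero hsub' hadd
  refine ⟨(x + 1) ^ 2 / (2 * (x - 1)), (x - 1) / 2, (1 - x) / (1 + x), 4 * x / (1 - x ^ 2), ?_, ?_⟩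
  · field_simp
    ring
  · field_simp
    ring

theorem exists_sum_eq_prod_eq_neg_one (h2 : (2 : F) ≠ 0) :
    ∃ a b c d : F, a + b + c + d = -1 ∧ a * b * c * d = -1 :=
  ⟨2, -2, -(1 / 2), -(1 / 2), by field_simp; ring, by field_simp⟩

theorem exists_sum_eq_prod_eq_one (h2 : (2 : F) ≠ 0) :
    ∃ a b c d : F, a + b + c + d = 1 ∧ a * b * c * d = 1 := by
  by_cases h3 : (3 : F) = 0
  · exact ⟨1, 1, 1, 1, by linear_combination h3, by ring⟩
  · have h8 : (8 : F) ≠ 0 := by simpa [show (8 : F) = 2 ^ 3 by norm_num] using h2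
    refine ⟨8 / 3, -(8 / 3), 9 / 8, -(1 / 8), ?_, ?_⟩
    · field_simp
      ring
    · field_simp
      ring

end

theorem stmt7 (F : Type*) [Field F] (h2 : ringChar F ≠ 2) (x : F) :
    ∃ a b c d : F, a + b + c + d = x ∧ a * b * c * d = x := by
  have two : (2 : F) ≠ 0 := Ring.two_ne_zero h2
  rcases eq_or_ne x 1 with rfl | hx₁
  · exact exists_sum_eq_prod_eq_one two
  rcases eq_or_ne x (-1) with rfl | hx₂
  · exact exists_sum_eq_prod_eq_neg_one two
  exact exists_sum_eq_prod_eq_of_ne_one_of_ne_neg_one two hx₁ hx₂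
end

section
/- Let F be a field with characteristic not equal to 2, and let k ≥ 2 be an integer. Then for every element x of F there exist elements a₁, …, a_{2k} of F such that a₁ + … + a_{2k} = x and a₁·a₂·…·a_{2k} = -x. -/
lemma core4_s8 (F : Type*) [Field F] (h2 : ringChar F ≠ 2) (x : F) :
    ∃ a b c d : F, a + b + c + d = x ∧ a * b * c * d = -x := by
  have two_ne : (2 : F) ≠ 0 := Ring.two_ne_zero h2
  by_cases hx : x = 0
  · exact ⟨0, 0, 0, 0, by simp [hx], by simp [hx]⟩
  by_cases hx1 : x + 1 = 0
  · -- x = -1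
    have hx' : x = -1 := by linear_combination hx1
    by_cases h3 : (3 : F) = 0
    · refine ⟨-1, -1, -1, -1, ?_, ?_⟩
      · rw [hx']; linear_combination -h3
      · rw [hx']; ring
    · refine ⟨1/3, -(3/2), 3/2, -(4/3), ?_, ?_⟩
      · rw [hx']; field_simp; ring
      · rw [hx']; field_simp; ring
  · refine ⟨x^2 / (x+1), (x+1)/x, -((x+1)/x), x/(x+1), ?_, ?_⟩
    · field_simp; ring
    · field_simp

lemma main (F : Type*) [Field F] (h2 : ringChar F ≠ 2)
    (k : ℕ) (hk : 2 ≤ k) : ∀ x : F,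
    ∃ a : Fin (2 * k) → F, (∑ i, a i) = x ∧ (∏ i, a i) = -x := by
  induction k, hk using Nat.le_induction with
  | base =>
    intro x
    obtain ⟨a, b, c, d, hs, hp⟩ := core4_s8 F h2 x
    refine ⟨![a, b, c, d], ?_, ?_⟩
    · simpa [Fin.sum_univ_four] using by linear_combination hs
    · simpa [Fin.prod_univ_four] using hp
  | succ k hk ih =>
    intro x
    obtain ⟨b, hs, hp⟩ := ih (-x)
    refine ⟨Fin.cons 1 (Fin.cons (-1) (fun i => -(b i))), ?_, ?_⟩
    · show (∑ i : Fin (2*k+1+1), Fin.cons 1 (Fin.cons (-1) (fun i => -(b i))) i) = x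
      rw [Fin.sum_univ_succ, Fin.sum_univ_succ]
      simp only [Fin.cons_zero, Fin.cons_succ, Finset.sum_neg_distrib, hs]
      ring
    · show (∏ i : Fin (2*k+1+1), Fin.cons 1 (Fin.cons (-1) (fun i => -(b i))) i) = -x
      rw [Fin.prod_univ_succ, Fin.prod_univ_succ]
      simp only [Fin.cons_zero, Fin.cons_succ]
      have : (∏ i : Fin (2*k), -(b i)) = ∏ i : Fin (2*k), b i := by
        have : ∀ i : Fin (2*k), -b i = (-1) * b i := fun i => by ring
        simp only [this, Finset.prod_mul_distrib, Finset.prod_const,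
          Finset.card_univ, Fintype.card_fin]
        rw [pow_mul]; norm_num
      rw [this, hp]; ring

theorem stmt8 (F : Type*) [Field F] (h2 : ringChar F ≠ 2)
    (k : ℕ) (hk : 2 ≤ k) (x : F) :
    ∃ a : Fin (2 * k) → F, (∑ i, a i) = x ∧ (∏ i, a i) = -x :=
  main F h2 k hk x
end

section
/- Let F be a field with characteristic not equal to 2, and let x be an element of F with x ≠ 1 and x ≠ -1. Set a = -(1-x)²/(2(1+x)), b = (1+x)/2, c = (1+x)/(1-x), d = 4x/(x²-1). Then a·b·c·d = x and a + b + c + d = 1. -/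
theorem stmt9 (F : Type*) [Field F] (h2 : ringChar F ≠ 2) (x : F)
    (hx1 : x ≠ 1) (hx2 : x ≠ -1) :
    let a := -(1 - x)^2 / (2 * (1 + x))
    let b := (1 + x) / 2
    let c := (1 + x) / (1 - x)
    let d := 4 * x / (x^2 - 1)
    a * b * c * d = x ∧ a + b + c + d = 1 := by
  have h2' : (2 : F) ≠ 0 := Ring.two_ne_zero h2
  have h_sub : 1 - x ≠ 0 := sub_ne_zero.mpr hx1.symm
  have h_add : 1 + x ≠ 0 := by rwa [add_comm, ← sub_neg_eq_add, sub_ne_zero]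
  have h_sq : x ^ 2 - 1 ≠ 0 := by
    rw [sub_ne_zero, Ne, sq_eq_one_iff, not_or]
    exact ⟨hx1, hx2⟩
  dsimp only
  constructor <;> (field_simp; ring)
end

section
/- Let F be a field with characteristic not equal to 2, and let x be an element of F with x ≠ -1 and x ≠ -3. Set a = (x+1)²/(2(x+3)), b = (x+3)/2, c = -(x+3)/(x+1), d = 4/((x+1)(x+3)). Then a·b·c·d = -1 and a + b + c + d = x. -/
theorem stmt10 (F : Type*) [Field F] (h2 : ringChar F ≠ 2) (x : F)
    (hx1 : x ≠ -1) (hx3 : x ≠ -3) :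
    let a := (x + 1)^2 / (2 * (x + 3))
    let b := (x + 3) / 2
    let c := -((x + 3) / (x + 1))
    let d := 4 / ((x + 1) * (x + 3))
    a * b * c * d = -1 ∧ a + b + c + d = x := by
  intro a b c d
  have h2' : (2 : F) ≠ 0 := by simpa using Ring.two_ne_zero h2
  have h1 : x + 1 ≠ 0 := fun h => hx1 (by linear_combination h)
  have h3 : x + 3 ≠ 0 := fun h => hx3 (by linear_combination h)
  constructor
  · show (x + 1)^2 / (2 * (x + 3)) * ((x + 3) / 2) * -((x + 3) / (x + 1)) *
      (4 / ((x + 1) * (x + 3))) = -1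
    rw [mul_neg, neg_mul, neg_eq_iff_eq_neg, neg_neg, div_mul_div_comm, div_mul_div_comm,
      div_mul_div_comm,
      div_eq_iff (by simp [mul_ne_zero, h1, h2', h3] : (2*(x+3)*2*(x+1)*((x+1)*(x+3)) : F) ≠ 0)]
    ring
  · show (x + 1)^2 / (2 * (x + 3)) + (x + 3) / 2 + -((x + 3) / (x + 1)) +
      4 / ((x + 1) * (x + 3)) = x
    rw [← neg_div, div_add_div _ _ (mul_ne_zero h2' h3) h2',
      div_add_div _ _ (mul_ne_zero (mul_ne_zero h2' h3) h2') h1,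
      div_add_div _ _ (mul_ne_zero (mul_ne_zero (mul_ne_zero h2' h3) h2') h1) (mul_ne_zero h1 h3),
      div_eq_iff (by simp [mul_ne_zero, h1, h2', h3] : (2*(x+3)*2*(x+1)*((x+1)*(x+3)) : F) ≠ 0)]
    ring
end

section
/- Let F be a field with characteristic not equal to 2, and let x be an element of F with x ≠ 1 and x ≠ -1. Set a = (x+1)²/(2(x-1)), b = (x-1)/2, c = (1-x)/(1+x), d = 4x/(1-x²). Then a·b·c·d = x and a + b + c + d = x. -/
/-!
Clearing denominators, with `1 - x² = (1 - x)(1 + x)`, the product cancels down: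
`(x + 1)² (x - 1) (1 - x) 4x / (4 (x - 1) (1 + x) (1 - x) (1 + x)) = x`. For the sum, the pairs
combine to `a + b = (x² + 1)/(x - 1)` and `c + d = (1 + x)/(1 - x)`, whose sum is `(x² - x)/(x - 1) = x`.
-/

section

variable {F : Type*} [Field F] {x : F}

theorem prod_quadruple_eq_self (h2 : (2 : F) ≠ 0) (hx1 : x ≠ 1) (hx2 : x ≠ -1) :
    (x + 1) ^ 2 / (2 * (x - 1)) * ((x - 1) / 2) * ((1 - x) / (1 + x)) * (4 * x / (1 - x ^ 2))
      = x := by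
  have hm : x - 1 ≠ 0 := sub_ne_zero.mpr hx1
  have hp : 1 + x ≠ 0 := fun h => hx2 (by linear_combination h)
  have hn : 1 - x ≠ 0 := fun h => hx1 (by linear_combination -h)
  rw [show (1 : F) - x ^ 2 = (1 - x) * (1 + x) by ring]
  field_simp
  ring

theorem add_sq_div_add_sub_div_two (h2 : (2 : F) ≠ 0) (hx1 : x ≠ 1) :
    (x + 1) ^ 2 / (2 * (x - 1)) + (x - 1) / 2 = (x ^ 2 + 1) / (x - 1) := by
  have hm : x - 1 ≠ 0 := sub_ne_zero.mpr hx1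
  field_simp
  ring

theorem sub_div_add_add_four_mul_div (hx1 : x ≠ 1) (hx2 : x ≠ -1) :
    (1 - x) / (1 + x) + 4 * x / (1 - x ^ 2) = (1 + x) / (1 - x) := by
  have hp : 1 + x ≠ 0 := fun h => hx2 (by linear_combination h)
  have hn : 1 - x ≠ 0 := fun h => hx1 (by linear_combination -h)
  rw [show (1 : F) - x ^ 2 = (1 - x) * (1 + x) by ring]
  field_simp
  ring

theorem sum_quadruple_eq_self (h2 : (2 : F) ≠ 0) (hx1 : x ≠ 1) (hx2 : x ≠ -1) :
    (x + 1) ^ 2 / (2 * (x - 1)) + (x - 1) / 2 + (1 - x) / (1 + x) + 4 * x / (1 - x ^ 2)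
      = x := by
  have hm : x - 1 ≠ 0 := sub_ne_zero.mpr hx1
  have hn : 1 - x ≠ 0 := fun h => hx1 (by linear_combination -h)
  rw [add_assoc, add_sq_div_add_sub_div_two h2 hx1, sub_div_add_add_four_mul_div hx1 hx2]
  field_simp
  ring

end

theorem stmt12 (F : Type*) [Field F] (h2 : ringChar F ≠ 2) (x : F)
    (hx1 : x ≠ 1) (hx2 : x ≠ -1) :
    let a := (x + 1)^2 / (2 * (x - 1))
    let b := (x - 1) / 2
    let c := (1 - x) / (1 + x)
    let d := 4 * x / (1 - x^2)
    a * b * c * d = x ∧ a + b + c + d = x := by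
  have h2' : (2 : F) ≠ 0 := Ring.two_ne_zero h2
  exact ⟨prod_quadruple_eq_self h2' hx1 hx2, sum_quadruple_eq_self h2' hx1 hx2⟩
end
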